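/- Let R be commutative, λ ∈ R, and consider the two-row Koszul factorization {(a_i, b_i), (a_j, b_j)} (tensor product of {a_i,b_i} and {a_j,b_j}). Then {(a_i, b_i), (a_j, b_j)} is isomorphic as a matrix factorization (of potential a_ib_i + a_jb_j) to {(a_i − λa_j, b_i), (a_j, b_j + λb_i)}. -/
import Mathlib


open Matrix

/-- The degree-0 differential of the two-row Koszul factorization
`{(a₁,b₁),(a₂,b₂)}` in the basis (|00⟩,|11⟩) → (|01⟩,|10⟩). -/
def koszulTwoRowD0 {R : Type*} [CommRing R] (a1 b1 a2 b2 : R) :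
    Matrix (Fin 2) (Fin 2) R :=
  !![a2, b1; a1, -b2]

/-- The degree-1 differential of the two-row Koszul factorization
`{(a₁,b₁),(a₂,b₂)}`. -/
def koszulTwoRowD1 {R : Type*} [CommRing R] (a1 b1 a2 b2 : R) :
    Matrix (Fin 2) (Fin 2) R :=
  !![b2, b1; a1, -a2]

/-- row operation `[i,j]_λ`: the two-row Koszul factorizations
`{(aᵢ, bᵢ), (aⱼ, bⱼ)}` and `{(aᵢ − λaⱼ, bᵢ), (aⱼ, bⱼ + λbᵢ)}` are isomorphic
matrix factorizations of `aᵢbᵢ + aⱼbⱼ`: there is a pair of invertible maps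
`(F₀, F₁)` intertwining both differentials. -/
theorem koszul_row_operation_iso
    {R : Type*} [CommRing R] (ai bi aj bj lam : R) :
    ∃ F0 F1 : Matrix (Fin 2) (Fin 2) R,
      IsUnit F0.det ∧ IsUnit F1.det ∧
      F1 * koszulTwoRowD0 ai bi aj bj
        = koszulTwoRowD0 (ai - lam * aj) bi aj (bj + lam * bi) * F0 ∧
      F0 * koszulTwoRowD1 ai bi aj bj
        = koszulTwoRowD1 (ai - lam * aj) bi aj (bj + lam * bi) * F1 := by
  refine ⟨!![1, 0; 0, 1], !![1, 0; -lam, 1], ?_, ?_, ?_, ?_⟩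
  · simp [Matrix.det_fin_two_of]
  · simp [Matrix.det_fin_two_of]
  · simp only [koszulTwoRowD0, Matrix.mul_fin_two]
    congr 1 <;> ring
  · simp only [koszulTwoRowD1, Matrix.mul_fin_two]
    congr 1 <;> ring
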